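/- arXiv:1803.06511 — 2 statements merged into one kernel-verified Lean document; each statement's English description precedes it below -/
import Mathlib

section
/- Define D = M₃⁴(β₃M₁² − β₂M₂²)² − 2β₁M₁²M₂²M₃²(β₃M₁² + β₂M₂²) + β₁²M₁⁴M₂⁴ and the tripling map M ↦ M̃: M̃₁ = 3M₁ − (4M₁³/D)(M₁²(β₁M₂² − β₃M₃²)² − β₂M₂²M₃²(β₁M₂² + β₃M₃²)), M̃₂ = −3M₂ + (4M₂³/D)(M₂²(β₁M₁² − β₂M₃²)² − β₃M₁²M₃²(β₁M₁² + β₂M₃²)), M̃₃ = −3M₃ + (4M₃³/D)(M₃²(β₂M₂² − β₃M₁²)² − β₁M₁²M₂²(β₃M₁² + β₂M₂²)). Then M̃₁² + M̃₂² + M̃₃² = M₁² + M₂² + M₃². -/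
/-- The tripling map of the Euler top preserves K = M₁² + M₂² + M₃². -/
theorem euler_tripling_preserves_K
    (α₁ α₂ α₃ β₁ β₂ β₃ M₁ M₂ M₃ D N₁ N₂ N₃ : ℝ)
    (hβ₁ : β₁ = α₁ - α₂) (hβ₂ : β₂ = α₂ - α₃) (hβ₃ : β₃ = α₃ - α₁)
    (hD : D = M₃ ^ 4 * (β₃ * M₁ ^ 2 - β₂ * M₂ ^ 2) ^ 2
        - 2 * β₁ * M₁ ^ 2 * M₂ ^ 2 * M₃ ^ 2 * (β₃ * M₁ ^ 2 + β₂ * M₂ ^ 2)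
        + β₁ ^ 2 * M₁ ^ 4 * M₂ ^ 4)
    (hD0 : D ≠ 0)
    (hN₁ : N₁ = 3 * M₁ - 4 * M₁ ^ 3 / D *
        (M₁ ^ 2 * (β₁ * M₂ ^ 2 - β₃ * M₃ ^ 2) ^ 2
          - β₂ * M₂ ^ 2 * M₃ ^ 2 * (β₁ * M₂ ^ 2 + β₃ * M₃ ^ 2)))
    (hN₂ : N₂ = -3 * M₂ + 4 * M₂ ^ 3 / D *
        (M₂ ^ 2 * (β₁ * M₁ ^ 2 - β₂ * M₃ ^ 2) ^ 2
          - β₃ * M₁ ^ 2 * M₃ ^ 2 * (β₁ * M₁ ^ 2 + β₂ * M₃ ^ 2)))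
    (hN₃ : N₃ = -3 * M₃ + 4 * M₃ ^ 3 / D *
        (M₃ ^ 2 * (β₂ * M₂ ^ 2 - β₃ * M₁ ^ 2) ^ 2
          - β₁ * M₁ ^ 2 * M₂ ^ 2 * (β₃ * M₁ ^ 2 + β₂ * M₂ ^ 2))) :
    N₁ ^ 2 + N₂ ^ 2 + N₃ ^ 2 = M₁ ^ 2 + M₂ ^ 2 + M₃ ^ 2 := by
  subst hβ₁ hβ₂ hβ₃ hN₁ hN₂ hN₃
  field_simp
  subst hD
  ring
end

section
/- With the tripling map M ↦ M̃ defined by M̃₁ = 3M₁ − (4M₁³/D)(M₁²(β₁M₂² − β₃M₃²)² − β₂M₂²M₃²(β₁M₂² + β₃M₃²)), M̃₂ = −3M₂ + (4M₂³/D)(M₂²(β₁M₁² − β₂M₃²)² − β₃M₁²M₃²(β₁M₁² + β₂M₃²)), M̃₃ = −3M₃ + (4M₃³/D)(M₃²(β₂M₂² − β₃M₁²)² − β₁M₁²M₂²(β₃M₁² + β₂M₂²)), where D = M₃⁴(β₃M₁² − β₂M₂²)² − 2β₁M₁²M₂²M₃²(β₃M₁² + β₂M₂²) + β₁²M₁⁴M₂⁴,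 the energy integral is preserved: α₁M̃₁² + α₂M̃₂² + α₃M̃₃² = α₁M₁² + α₂M₂² + α₃M₃². -/
set_option maxHeartbeats 4000000 in
/-- The tripling map of the Euler top preserves H = α₁M₁² + α₂M₂² + α₃M₃². -/
theorem euler_tripling_preserves_H
    (α₁ α₂ α₃ β₁ β₂ β₃ M₁ M₂ M₃ D N₁ N₂ N₃ : ℝ)
    (hβ₁ : β₁ = α₁ - α₂) (hβ₂ : β₂ = α₂ - α₃) (hβ₃ : β₃ = α₃ - α₁)
    (hD : D = M₃ ^ 4 * (β₃ * M₁ ^ 2 - β₂ * M₂ ^ 2) ^ 2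
        - 2 * β₁ * M₁ ^ 2 * M₂ ^ 2 * M₃ ^ 2 * (β₃ * M₁ ^ 2 + β₂ * M₂ ^ 2)
        + β₁ ^ 2 * M₁ ^ 4 * M₂ ^ 4)
    (hD0 : D ≠ 0)
    (hN₁ : N₁ = 3 * M₁ - 4 * M₁ ^ 3 / D *
        (M₁ ^ 2 * (β₁ * M₂ ^ 2 - β₃ * M₃ ^ 2) ^ 2
          - β₂ * M₂ ^ 2 * M₃ ^ 2 * (β₁ * M₂ ^ 2 + β₃ * M₃ ^ 2)))
    (hN₂ : N₂ = -3 * M₂ + 4 * M₂ ^ 3 / D *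
        (M₂ ^ 2 * (β₁ * M₁ ^ 2 - β₂ * M₃ ^ 2) ^ 2
          - β₃ * M₁ ^ 2 * M₃ ^ 2 * (β₁ * M₁ ^ 2 + β₂ * M₃ ^ 2)))
    (hN₃ : N₃ = -3 * M₃ + 4 * M₃ ^ 3 / D *
        (M₃ ^ 2 * (β₂ * M₂ ^ 2 - β₃ * M₁ ^ 2) ^ 2
          - β₁ * M₁ ^ 2 * M₂ ^ 2 * (β₃ * M₁ ^ 2 + β₂ * M₂ ^ 2))) :
    α₁ * N₁ ^ 2 + α₂ * N₂ ^ 2 + α₃ * N₃ ^ 2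
      = α₁ * M₁ ^ 2 + α₂ * M₂ ^ 2 + α₃ * M₃ ^ 2 := by
  subst hβ₁ hβ₂ hβ₃ hN₁ hN₂ hN₃
  field_simp
  subst hD
  set_option maxRecDepth 100000 in
  ring
end
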